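/- arXiv:1506.07346 — 2 statements merged into one kernel-verified Lean document; each statement's English description precedes it below -/
import Mathlib

section
/- Let Y be a rich solid QBF-space on X whose quasi-norm is a p-norm for some 0 < p ≤ 1, i.e. ‖F+G|Y‖^p ≤ ‖F|Y‖^p + ‖G|Y‖^p for all F,G ∈ Y, and let U = {U_i}_{i∈I} be an admissible covering of X. Set ω♭(i) = ‖χ_{U_i}|Y‖ and ω♮(i) = μ(U_i)^{-1}‖χ_{U_i}|Y‖. Then there is a constant c ≥ 1 (independent of the sequence) such that: (a) every sequence λ = (λ_i)_{i∈I} with Σ_{i∈I} |λ_i|^p ω♭(i)^p < ∞ belongs to Y♭(U) with ‖λ|Y♭‖^p ≤ c Σ_{i∈I} |λ_i|^p ω♭(i)^p; (b) for every λ ∈ Y♭(U) and every j ∈ I, |λ_j| ω♭(j) ≤ ‖λ|Y♭‖. The analogous statements hold for Y♮(U) with ω♮ in place of ω♭. -/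
/-! A `p`-norm on a complete solid space is countably `p`-subadditive on nonnegative functions.
The partial sums of `∑ fₙ` are Cauchy in `Y`, since `‖∑_{m ≤ k < n} fₖ‖^p ≤ ∑_{m ≤ k < n} ‖fₖ‖^p`;
completeness yields a limit `G`, solidity and definiteness give `∑ fₙ ≤ |G|` a.e., and the
`p`-triangle inequality gives `‖G‖^p ≤ ∑ ‖fₙ‖^p`. For `fᵢ = |λᵢ| χ_{Uᵢ}` (or `|λᵢ| μ(Uᵢ)⁻¹ χ_{Uᵢ}`)
this is (a) with `c = 1`, while (b) is solidity, one term being dominated by the whole sum.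
A locally finite family of nonempty sets in a σ-compact space is countable, which makes these
sums measurable. -/

open MeasureTheory Filter Topology
open scoped ENNReal NNReal

noncomputable section

/-- Model of a rich solid quasi-Banach function space `Y` on `(X, μ)`: `Y` is described by a
solid quasi-norm functional `N` on nonnegative extended-real valued functions (a measurable
`F : X → ℂ` belongs to `Y` iff `N (fun x => ‖F x‖₊) ≠ ∞`). -/
structure QBF (X : Type*) [MeasurableSpace X] (μ : MeasureTheory.Measure X) where
  /-- the quasi-norm functional -/
  N : (X → ℝ≥0∞) → ℝ≥0∞
  /-- the quasi-norm constant `C_Y` -/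
  C : ℝ≥0∞
  one_le_C : 1 ≤ C
  C_ne_top : C ≠ ⊤
  /-- solidity -/
  mono : ∀ f g : X → ℝ≥0∞, Measurable f → Measurable g →
    (∀ᵐ x ∂μ, f x ≤ g x) → N f ≤ N g
  /-- quasi-triangle inequality with constant `C_Y` -/
  add_le : ∀ f g : X → ℝ≥0∞, Measurable f → Measurable g →
    N (fun x => f x + g x) ≤ C * (N f + N g)
  /-- homogeneity -/
  smul_eq : ∀ (c : ℝ≥0∞) (f : X → ℝ≥0∞), Measurable f → N (fun x => c * f x) = c * N f
  /-- definiteness (up to a.e. equality) -/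
  eq_zero : ∀ f : X → ℝ≥0∞, Measurable f → N f = 0 → f =ᵐ[μ] 0
  /-- completeness of `Y` -/
  complete : ∀ F : ℕ → X → ℂ, (∀ n, Measurable (F n)) →
    (∀ n, N (fun x => (‖F n x‖₊ : ℝ≥0∞)) ≠ ⊤) →
    Filter.Tendsto (fun q : ℕ × ℕ => N (fun x => (‖F q.1 x - F q.2 x‖₊ : ℝ≥0∞)))
      Filter.atTop (nhds 0) →
    ∃ G : X → ℂ, Measurable G ∧ N (fun x => (‖G x‖₊ : ℝ≥0∞)) ≠ ⊤ ∧
      Filter.Tendsto (fun n => N (fun x => (‖F n x - G x‖₊ : ℝ≥0∞)))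
        Filter.atTop (nhds 0)

/-- An admissible covering of `X`: a locally finite covering by measurable, relatively
compact sets with nonempty interior and finite intersection number `σ`. -/
structure AdmissibleCovering {X : Type*} [TopologicalSpace X] [MeasurableSpace X]
    {I : Type*} (U : I → Set X) (σ : ℕ) : Prop where
  meas : ∀ i, MeasurableSet (U i)
  rel_compact : ∀ i, IsCompact (closure (U i))
  interior_nonempty : ∀ i, (interior (U i)).Nonempty
  covers : (⋃ i, U i) = Set.univ
  locFin : LocallyFinite U
  inter_finite : ∀ i, {j | (U i ∩ U j).Nonempty}.Finite
  inter_card_le : ∀ i, {j | (U i ∩ U j).Nonempty}.ncard ≤ σ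

variable {X : Type*} [TopologicalSpace X] [MeasurableSpace X] {μ : MeasureTheory.Measure X}

/-- The `Y♭(U)` quasi-norm of a sequence `λ`: `‖Σᵢ |λᵢ| χ_{Uᵢ} | Y‖`. -/
def flatN (Q : QBF X μ) {I : Type*} (U : I → Set X) (lam : I → ℂ) : ℝ≥0∞ :=
  Q.N (fun x => ∑' i, (U i).indicator (fun _ => (‖lam i‖₊ : ℝ≥0∞)) x)

/-- The `Y♮(U)` quasi-norm of a sequence `λ`: `‖Σᵢ |λᵢ| μ(Uᵢ)⁻¹ χ_{Uᵢ} | Y‖`. -/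
def natN (Q : QBF X μ) {I : Type*} (U : I → Set X) (lam : I → ℂ) : ℝ≥0∞ :=
  Q.N (fun x => ∑' i, (U i).indicator (fun _ => (‖lam i‖₊ : ℝ≥0∞) / μ (U i)) x)

lemma Complex.coe_nnnorm_sum_ofReal_nnreal {ι : Type*} (s : Finset ι) (r : ι → ℝ≥0) :
    (‖∑ i ∈ s, ((r i : ℝ) : ℂ)‖₊ : ℝ≥0∞) = ∑ i ∈ s, (r i : ℝ≥0∞) := by
  rw [← Complex.ofReal_sum, ← NNReal.coe_sum, Complex.nnnorm_real, NNReal.nnnorm_eq,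
    ENNReal.ofNNReal_finsetSum]

lemma ENNReal.tendsto_nhds_zero_of_tendsto_rpow {ι : Type*} {l : Filter ι} {a : ι → ℝ≥0∞}
    {p : ℝ} (hp : 0 < p) (h : Tendsto (fun i => a i ^ p) l (𝓝 0)) : Tendsto a l (𝓝 0) := by
  have hcont := (ENNReal.continuous_rpow_const (y := p⁻¹)).tendsto 0
  rw [ENNReal.zero_rpow_of_pos (inv_pos.2 hp)] at hcont
  simpa [Function.comp_def, ← ENNReal.rpow_mul, mul_inv_cancel₀ hp.ne'] using hcont.comp h

section PartialSum

variable {Ω : Type*}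

/-- `ℂ`-valued, because completeness of `Y` is stated for complex functions. -/
def partialSum (g : ℕ → Ω → ℝ≥0) (n : ℕ) (x : Ω) : ℂ :=
  ∑ k ∈ Finset.range n, ((g k x : ℝ) : ℂ)

lemma measurable_partialSum [MeasurableSpace Ω] {g : ℕ → Ω → ℝ≥0} (hg : ∀ k, Measurable (g k))
    (n : ℕ) : Measurable (partialSum g n) :=
  Finset.measurable_sum _ fun k _ => Complex.measurable_ofReal.comp (hg k).coe_nnreal_real

lemma coe_nnnorm_partialSum (g : ℕ → Ω → ℝ≥0) (n : ℕ) (x : Ω) :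
    (‖partialSum g n x‖₊ : ℝ≥0∞) = ∑ k ∈ Finset.range n, (g k x : ℝ≥0∞) :=
  Complex.coe_nnnorm_sum_ofReal_nnreal _ _

lemma coe_nnnorm_partialSum_sub (g : ℕ → Ω → ℝ≥0) {m n : ℕ} (hmn : m ≤ n) (x : Ω) :
    (‖partialSum g n x - partialSum g m x‖₊ : ℝ≥0∞) = ∑ k ∈ Finset.Ico m n, (g k x : ℝ≥0∞) := by
  rw [partialSum, partialSum, ← Finset.sum_Ico_eq_sub _ hmn, Complex.coe_nnnorm_sum_ofReal_nnreal]

end PartialSum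

namespace QBF

variable {Ω : Type*} [MeasurableSpace Ω] {ν : Measure Ω} (Q : QBF Ω ν)

def IsPNorm (p : ℝ) : Prop :=
  ∀ f g : Ω → ℝ≥0∞, Measurable f → Measurable g →
    Q.N (fun x => f x + g x) ^ p ≤ Q.N f ^ p + Q.N g ^ p

lemma N_zero : Q.N (fun _ => 0) = 0 := by
  simpa using Q.smul_eq 0 0 measurable_const

lemma N_congr_ae {f g : Ω → ℝ≥0∞} (hf : Measurable f) (hg : Measurable g) (h : f =ᵐ[ν] g) :
    Q.N f = Q.N g :=
  le_antisymm (Q.mono f g hf hg h.le) (Q.mono g f hg hf h.symm.le)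

lemma N_indicator_const {s : Set Ω} (hs : MeasurableSet s) (c : ℝ≥0∞) :
    Q.N (s.indicator fun _ => c) = c * Q.N (s.indicator fun _ => 1) := by
  rw [← Q.smul_eq c _ (measurable_const.indicator hs)]
  congr 1
  ext x
  by_cases hx : x ∈ s <;> simp [hx]

lemma ae_lt_top_of_N_ne_top {f : Ω → ℝ≥0∞} (hf : Measurable f) (h : Q.N f ≠ ⊤) :
    ∀ᵐ x ∂ν, f x < ⊤ := by
  set E := {x | f x = ⊤}
  have hE : MeasurableSet E := hf (measurableSet_singleton ⊤)
  -- `f ≥ ⊤ • χ_E`, so the finite quasi-norm of `f` forces `‖χ_E|Y‖ = 0`.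
  have hle : ⊤ * Q.N (E.indicator fun _ => 1) ≤ Q.N f := by
    rw [← Q.N_indicator_const hE]
    refine Q.mono _ _ (measurable_const.indicator hE) hf (ae_of_all _ fun x => ?_)
    by_cases hx : x ∈ E
    · simp [hx, show f x = ⊤ from hx]
    · simp [hx]
  have hzero : Q.N (E.indicator fun _ => 1) = 0 := by
    by_contra h0
    exact h (top_unique (ENNReal.top_mul h0 ▸ hle))
  filter_upwards [Q.eq_zero _ (measurable_const.indicator hE) hzero] with x hx
  by_contra hx'
  simp_all [E]

variable {Q} {p : ℝ}

lemma IsPNorm.N_finset_sum_rpow_le (hQ : Q.IsPNorm p) (hp : 0 < p) {ι : Type*} (s : Finset ι)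
    {f : ι → Ω → ℝ≥0∞} (hf : ∀ i, Measurable (f i)) :
    Q.N (fun x => ∑ i ∈ s, f i x) ^ p ≤ ∑ i ∈ s, Q.N (f i) ^ p := by
  classical
  induction s using Finset.induction_on with
  | empty => simp [Q.N_zero, ENNReal.zero_rpow_of_pos hp]
  | insert a s ha ih =>
    simp only [Finset.sum_insert ha]
    exact (hQ _ _ (hf a) (Finset.measurable_sum s fun i _ => hf i)).trans (by gcongr)

lemma ae_le_nnnorm_of_tendsto {F : ℕ → Ω → ℂ} {G : Ω → ℂ} (hF : ∀ n, Measurable (F n))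
    (hG : Measurable G)
    (hFG : Tendsto (fun n => Q.N (fun x => (‖F n x - G x‖₊ : ℝ≥0∞))) atTop (𝓝 0))
    {h : Ω → ℝ≥0∞} (hh : Measurable h) (hle : ∀ᶠ n in atTop, ∀ x, h x ≤ ‖F n x‖₊) :
    ∀ᵐ x ∂ν, h x ≤ ‖G x‖₊ := by
  have hdiff : ∀ᶠ n in atTop,
      Q.N (fun x => h x - ‖G x‖₊) ≤ Q.N (fun x => (‖F n x - G x‖₊ : ℝ≥0∞)) := by
    filter_upwards [hle] with n hn
    refine Q.mono _ _ (hh.sub hG.nnnorm.coe_nnreal_ennreal)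
      ((hF n).sub hG).nnnorm.coe_nnreal_ennreal (ae_of_all _ fun x => ?_)
    rw [tsub_le_iff_left, ← ENNReal.coe_add]
    exact (hn x).trans (ENNReal.coe_le_coe.2 (nnnorm_le_nnnorm_add_nnnorm_sub' _ _))
  have hzero : Q.N (fun x => h x - ‖G x‖₊) = 0 :=
    nonpos_iff_eq_zero.1 (ge_of_tendsto hFG hdiff)
  filter_upwards [Q.eq_zero _ (hh.sub hG.nnnorm.coe_nnreal_ennreal) hzero] with x hx
  exact tsub_eq_zero_iff_le.1 hx

lemma IsPNorm.N_rpow_le_of_tendsto (hQ : Q.IsPNorm p) (hp : 0 < p) {F : ℕ → Ω → ℂ}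
    {G : Ω → ℂ} (hF : ∀ n, Measurable (F n)) (hG : Measurable G)
    (hFG : Tendsto (fun n => Q.N (fun x => (‖F n x - G x‖₊ : ℝ≥0∞))) atTop (𝓝 0))
    {S : ℝ≥0∞} (hS : ∀ n, Q.N (fun x => (‖F n x‖₊ : ℝ≥0∞)) ^ p ≤ S) :
    Q.N (fun x => (‖G x‖₊ : ℝ≥0∞)) ^ p ≤ S := by
  have hstep : ∀ n, Q.N (fun x => (‖G x‖₊ : ℝ≥0∞)) ^ p ≤
      S + Q.N (fun x => (‖F n x - G x‖₊ : ℝ≥0∞)) ^ p := by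
    intro n
    have hmF : Measurable fun x => (‖F n x‖₊ : ℝ≥0∞) := by fun_prop
    have hmFG : Measurable fun x => (‖F n x - G x‖₊ : ℝ≥0∞) := by fun_prop
    calc Q.N (fun x => (‖G x‖₊ : ℝ≥0∞)) ^ p
        ≤ Q.N (fun x => (‖F n x‖₊ : ℝ≥0∞) + ‖F n x - G x‖₊) ^ p := by
          gcongr
          refine Q.mono _ _ hG.nnnorm.coe_nnreal_ennreal (hmF.add hmFG) (ae_of_all _ fun x => ?_)
          exact_mod_cast nnnorm_le_nnnorm_add_nnnorm_sub _ _
      _ ≤ _ := (hQ _ _ hmF hmFG).trans (by gcongr; exact hS n)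
  have hlim : Tendsto (fun n => S + Q.N (fun x => (‖F n x - G x‖₊ : ℝ≥0∞)) ^ p) atTop
      (𝓝 (S + 0)) := by
    refine tendsto_const_nhds.add ?_
    simpa [Function.comp_def, ENNReal.zero_rpow_of_pos hp] using
      ((ENNReal.continuous_rpow_const (y := p)).tendsto 0).comp hFG
  simpa using ge_of_tendsto hlim (Eventually.of_forall hstep)

lemma IsPNorm.tendsto_N_partialSum_sub (hQ : Q.IsPNorm p) (hp : 0 < p) {g : ℕ → Ω → ℝ≥0}
    (hg : ∀ k, Measurable (g k)) (hS : ∑' k, Q.N (fun x => g k x) ^ p ≠ ⊤) :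
    Tendsto (fun q : ℕ × ℕ => Q.N (fun x => ‖partialSum g q.1 x - partialSum g q.2 x‖₊))
      atTop (𝓝 0) := by
  set tail : ℕ → ℝ≥0∞ := fun m => ∑' k, Q.N (fun x => g (k + m) x) ^ p
  have hle : ∀ m n, m ≤ n →
      Q.N (fun x => ‖partialSum g n x - partialSum g m x‖₊) ^ p ≤ tail m := by
    intro m n hmn
    simp_rw [coe_nnnorm_partialSum_sub g hmn]
    refine (hQ.N_finset_sum_rpow_le hp _ fun k => (hg k).coe_nnreal_ennreal).trans ?_
    rw [Finset.sum_Ico_eq_sum_range]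
    simpa only [add_comm m] using ENNReal.sum_le_tsum (Finset.range (n - m))
  have hle_min : ∀ q : ℕ × ℕ,
      Q.N (fun x => ‖partialSum g q.1 x - partialSum g q.2 x‖₊) ^ p ≤ tail (min q.1 q.2) := by
    rintro ⟨n, m⟩
    rcases le_total m n with h | h
    · simpa [min_eq_right h] using hle m n h
    · simp_rw [min_eq_left h, ← nnnorm_neg (partialSum g n _ - _), neg_sub]
      exact hle n m h
  have hmin : Tendsto (fun q : ℕ × ℕ => min q.1 q.2) atTop atTop :=
    tendsto_atTop_atTop.2 fun b => ⟨(b, b), fun q hq => le_min hq.1 hq.2⟩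
  exact ENNReal.tendsto_nhds_zero_of_tendsto_rpow hp <|
    tendsto_of_tendsto_of_tendsto_of_le_of_le tendsto_const_nhds
      ((ENNReal.tendsto_sum_nat_add _ hS).comp hmin) (fun _ => zero_le) hle_min

lemma IsPNorm.N_tsum_coe_rpow_le (hQ : Q.IsPNorm p) (hp : 0 < p) {g : ℕ → Ω → ℝ≥0}
    (hg : ∀ k, Measurable (g k)) :
    Q.N (fun x => ∑' k, (g k x : ℝ≥0∞)) ^ p ≤ ∑' k, Q.N (fun x => g k x) ^ p := by
  set S := ∑' k, Q.N (fun x => g k x) ^ p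
  rcases eq_or_ne S ⊤ with hS | hS
  · simp [hS]
  have hgm : ∀ k, Measurable fun x => (g k x : ℝ≥0∞) := fun k => (hg k).coe_nnreal_ennreal
  have hF := measurable_partialSum hg
  have hF_le : ∀ n, Q.N (fun x => ‖partialSum g n x‖₊) ^ p ≤ S := fun n => by
    simp_rw [coe_nnnorm_partialSum]
    exact (hQ.N_finset_sum_rpow_le hp _ hgm).trans (ENNReal.sum_le_tsum _)
  have hF_ne_top : ∀ n, Q.N (fun x => ‖partialSum g n x‖₊) ≠ ⊤ := fun n =>
    (ENNReal.rpow_eq_top_iff_of_pos hp).not.1 (ne_top_of_le_ne_top hS (hF_le n))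
  obtain ⟨G, hGm, -, hFG⟩ :=
    Q.complete _ hF hF_ne_top (hQ.tendsto_N_partialSum_sub hp hg hS)
  have hpartial_le : ∀ n, ∀ᵐ x ∂ν, ∑ k ∈ Finset.range n, (g k x : ℝ≥0∞) ≤ ‖G x‖₊ :=
    fun n => Q.ae_le_nnnorm_of_tendsto hF hGm hFG (Finset.measurable_sum _ fun k _ => hgm k) <|
      eventually_atTop.2 ⟨n, fun m hm x => by
        rw [coe_nnnorm_partialSum]
        exact Finset.sum_le_sum_of_subset (Finset.range_subset_range.2 hm)⟩
  have htsum_le : ∀ᵐ x ∂ν, ∑' k, (g k x : ℝ≥0∞) ≤ ‖G x‖₊ := by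
    filter_upwards [ae_all_iff.2 hpartial_le] with x hx
    rw [ENNReal.tsum_eq_iSup_nat]
    exact iSup_le hx
  calc Q.N (fun x => ∑' k, (g k x : ℝ≥0∞)) ^ p ≤ Q.N (fun x => ‖G x‖₊) ^ p := by
        gcongr
        exact Q.mono _ _ (Measurable.tsum hgm) hGm.nnnorm.coe_nnreal_ennreal htsum_le
    _ ≤ S := hQ.N_rpow_le_of_tendsto hp hF hGm hFG hF_le

lemma IsPNorm.N_tsum_nat_rpow_le (hQ : Q.IsPNorm p) (hp : 0 < p) {f : ℕ → Ω → ℝ≥0∞}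
    (hf : ∀ n, Measurable (f n)) :
    Q.N (fun x => ∑' n, f n x) ^ p ≤ ∑' n, Q.N (f n) ^ p := by
  rcases eq_or_ne (∑' n, Q.N (f n) ^ p) ⊤ with hS | hS
  · simp [hS]
  have hfin : ∀ n, ∀ᵐ x ∂ν, f n x < ⊤ := fun n => Q.ae_lt_top_of_N_ne_top (hf n) <|
    (ENNReal.rpow_eq_top_iff_of_pos hp).not.1 (ENNReal.ne_top_of_tsum_ne_top hS n)
  set g : ℕ → Ω → ℝ≥0 := fun n x => (f n x).toNNReal
  have hg : ∀ n, Measurable (g n) := fun n => (hf n).ennreal_toNNReal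
  have hgm : ∀ n, Measurable fun x => (g n x : ℝ≥0∞) := fun n => (hg n).coe_nnreal_ennreal
  have hgf : ∀ n, (fun x => (g n x : ℝ≥0∞)) =ᵐ[ν] f n := fun n =>
    (hfin n).mono fun x hx => ENNReal.coe_toNNReal hx.ne
  have hsum : (fun x => ∑' n, (g n x : ℝ≥0∞)) =ᵐ[ν] fun x => ∑' n, f n x := by
    filter_upwards [ae_all_iff.2 hgf] with x hx
    exact tsum_congr hx
  rw [← Q.N_congr_ae (Measurable.tsum hgm) (Measurable.tsum hf) hsum]
  simpa only [Q.N_congr_ae (hgm _) (hf _) (hgf _)] using hQ.N_tsum_coe_rpow_le hp hg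

lemma IsPNorm.N_tsum_rpow_le (hQ : Q.IsPNorm p) (hp : 0 < p) {ι : Type*} [Countable ι]
    {f : ι → Ω → ℝ≥0∞} (hf : ∀ i, Measurable (f i)) :
    Q.N (fun x => ∑' i, f i x) ^ p ≤ ∑' i, Q.N (f i) ^ p := by
  obtain ⟨e, he⟩ := Countable.exists_injective_nat ι
  set F : ℕ → Ω → ℝ≥0∞ := Function.extend e f 0
  have hF : ∀ n, Measurable (F n) := by
    intro n
    by_cases hn : ∃ i, e i = n
    · obtain ⟨i, rfl⟩ := hn
      simpa [F, he.extend_apply] using hf i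
    · simp only [F, Function.extend_apply' _ _ _ hn]
      exact measurable_const
  have hsum : ∀ x, ∑' n, F n x = ∑' i, f i x := fun x => by
    rw [← tsum_extend_zero he]
    exact tsum_congr fun n => Function.apply_extend (fun h : Ω → ℝ≥0∞ => h x) e 0 n
  have hN : ∑' n, Q.N (F n) ^ p = ∑' i, Q.N (f i) ^ p := by
    rw [← tsum_extend_zero he]
    refine tsum_congr fun n => ?_
    rw [Function.apply_extend (fun h => Q.N h ^ p)]
    congr 1
    ext n
    simp [Pi.zero_def, Q.N_zero, ENNReal.zero_rpow_of_pos hp]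
  simpa only [hsum, hN] using hQ.N_tsum_nat_rpow_le hp hF

lemma IsPNorm.N_tsum_indicator_rpow_le (hQ : Q.IsPNorm p) (hp : 0 < p) {ι : Type*}
    [Countable ι] {U : ι → Set Ω} (hU : ∀ i, MeasurableSet (U i)) (a : ι → ℝ≥0∞) :
    Q.N (fun x => ∑' i, (U i).indicator (fun _ => a i) x) ^ p ≤
      ∑' i, (a i * Q.N ((U i).indicator fun _ => 1)) ^ p := by
  calc _ ≤ _ := hQ.N_tsum_rpow_le hp fun i => measurable_const.indicator (hU i)
    _ = _ := tsum_congr fun i => by rw [Q.N_indicator_const (hU i)]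

lemma mul_N_indicator_le_N_tsum_indicator {ι : Type*} [Countable ι] {U : ι → Set Ω}
    (hU : ∀ i, MeasurableSet (U i)) (a : ι → ℝ≥0∞) (j : ι) :
    a j * Q.N ((U j).indicator fun _ => 1) ≤
      Q.N (fun x => ∑' i, (U i).indicator (fun _ => a i) x) := by
  rw [← Q.N_indicator_const (hU j)]
  exact Q.mono _ _ (measurable_const.indicator (hU j))
    (Measurable.tsum fun i => measurable_const.indicator (hU i))
    (ae_of_all _ fun x => ENNReal.le_tsum (f := fun i => (U i).indicator (fun _ => a i) x) j)

end QBF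

theorem sequence_space_embeddings_general
    [SigmaCompactSpace X]
    (Q : QBF X μ)
    (p : ℝ) (hp0 : 0 < p)
    (hpnorm : ∀ f g : X → ℝ≥0∞, Measurable f → Measurable g →
      Q.N (fun x => f x + g x) ^ p ≤ Q.N f ^ p + Q.N g ^ p)
    {I : Type*} (U : I → Set X) (σ : ℕ) (hU : AdmissibleCovering U σ) :
    ∃ c : ℝ≥0∞, 1 ≤ c ∧ c ≠ ⊤ ∧
      -- (a) for `Y♭`
      (∀ lam : I → ℂ,
        flatN Q U lam ^ p ≤
          c * ∑' i, (‖lam i‖₊ : ℝ≥0∞) ^ p * Q.N ((U i).indicator fun _ => 1) ^ p) ∧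
      -- (b) for `Y♭`
      (∀ (lam : I → ℂ) (j : I),
        (‖lam j‖₊ : ℝ≥0∞) * Q.N ((U j).indicator fun _ => 1) ≤ flatN Q U lam) ∧
      -- (a) for `Y♮`
      (∀ lam : I → ℂ,
        natN Q U lam ^ p ≤
          c * ∑' i, (‖lam i‖₊ : ℝ≥0∞) ^ p *
            (Q.N ((U i).indicator fun _ => 1) / μ (U i)) ^ p) ∧
      -- (b) for `Y♮`
      (∀ (lam : I → ℂ) (j : I),
        (‖lam j‖₊ : ℝ≥0∞) * (Q.N ((U j).indicator fun _ => 1) / μ (U j)) ≤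
          natN Q U lam) := by
  have : Countable I := Set.countable_univ_iff.1 <|
    hU.locFin.countable_univ fun i => (hU.interior_nonempty i).mono interior_subset
  have hQ : Q.IsPNorm p := hpnorm
  refine ⟨1, le_rfl, ENNReal.one_ne_top, fun lam => ?_, fun lam j => ?_, fun lam => ?_,
    fun lam j => ?_⟩
  · simpa only [flatN, one_mul, ENNReal.mul_rpow_of_nonneg _ _ hp0.le] using
      hQ.N_tsum_indicator_rpow_le hp0 hU.meas fun i => (‖lam i‖₊ : ℝ≥0∞)
  · exact Q.mul_N_indicator_le_N_tsum_indicator hU.meas _ j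
  · simpa only [natN, one_mul, ENNReal.mul_comm_div, ENNReal.mul_rpow_of_nonneg _ _ hp0.le] using
      hQ.N_tsum_indicator_rpow_le hp0 hU.meas fun i => (‖lam i‖₊ : ℝ≥0∞) / μ (U i)
  · simpa only [natN, ENNReal.mul_comm_div] using
      Q.mul_N_indicator_le_N_tsum_indicator hU.meas (fun i => (‖lam i‖₊ : ℝ≥0∞) / μ (U i)) j

/-- If the quasi-norm of `Y` is a `p`-norm (`0 < p ≤ 1`), then with
`ω♭(i) = ‖χ_{Uᵢ}|Y‖` and `ω♮(i) = μ(Uᵢ)⁻¹ ‖χ_{Uᵢ}|Y‖` one has the continuous embeddings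
`ℓ_p^{ω♭}(I) ↪ Y♭(U) ↪ ℓ_∞^{ω♭}(I)` and `ℓ_p^{ω♮}(I) ↪ Y♮(U) ↪ ℓ_∞^{ω♮}(I)`:
(a) `‖λ|Y♭‖^p ≤ c Σᵢ |λᵢ|^p ω♭(i)^p`; (b) `|λⱼ| ω♭(j) ≤ ‖λ|Y♭‖`; and analogously for `Y♮`. -/
theorem sequence_space_embeddings
    [BorelSpace X] [T2Space X] [LocallyCompactSpace X] [SigmaCompactSpace X]
    [IsFiniteMeasureOnCompacts μ]
    (hsupp : ∀ V : Set X, IsOpen V → V.Nonempty → 0 < μ V)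
    (Q : QBF X μ)
    (hrich : ∀ K : Set X, IsCompact K → Q.N (K.indicator fun _ => 1) ≠ ⊤)
    (p : ℝ) (hp0 : 0 < p) (hp1 : p ≤ 1)
    (hpnorm : ∀ f g : X → ℝ≥0∞, Measurable f → Measurable g →
      Q.N (fun x => f x + g x) ^ p ≤ Q.N f ^ p + Q.N g ^ p)
    {I : Type*} (U : I → Set X) (σ : ℕ) (hU : AdmissibleCovering U σ) :
    ∃ c : ℝ≥0∞, 1 ≤ c ∧ c ≠ ⊤ ∧
      -- (a) for `Y♭`
      (∀ lam : I → ℂ,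
        flatN Q U lam ^ p ≤
          c * ∑' i, (‖lam i‖₊ : ℝ≥0∞) ^ p * Q.N ((U i).indicator fun _ => 1) ^ p) ∧
      -- (b) for `Y♭`
      (∀ (lam : I → ℂ) (j : I),
        (‖lam j‖₊ : ℝ≥0∞) * Q.N ((U j).indicator fun _ => 1) ≤ flatN Q U lam) ∧
      -- (a) for `Y♮`
      (∀ lam : I → ℂ,
        natN Q U lam ^ p ≤
          c * ∑' i, (‖lam i‖₊ : ℝ≥0∞) ^ p *
            (Q.N ((U i).indicator fun _ => 1) / μ (U i)) ^ p) ∧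
      -- (b) for `Y♮`
      (∀ (lam : I → ℂ) (j : I),
        (‖lam j‖₊ : ℝ≥0∞) * (Q.N ((U j).indicator fun _ => 1) / μ (U j)) ≤
          natN Q U lam) :=
  sequence_space_embeddings_general Q p hp0 hpnorm U σ hU
end
end

section
/- Let U = {U_i}_{i∈I} be an admissible covering of X with intersection number σ(U), let ν : X → (0,∞) be measurable and 0 < p < ∞. Then there exist constants 0 < c ≤ C < ∞, depending only on p and σ(U), such that for every sequence (λ_i)_{i∈I} of complex numbers, c · Σ_{i∈I} |λ_i|^p ∫_{U_i} ν(y)^p dμ(y) ≤ ∫_X ( Σ_{i∈I} |λ_i| χ_{U_i}(y) ν(y) )^p dμ(y) ≤ C · Σ_{i∈I} |λ_i|^p ∫_{U_i} ν(y)^p dμ(y), where all quantities may equal +∞ and the inner sum is locally finite, hence defined pointwise. -/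
/-!
Every point lies in at most `N = max σ 1` of the sets `Uᵢ`, so at each point the locally finite
sums `Σᵢ |λᵢ|^p χ_{Uᵢ}` and `(Σᵢ |λᵢ| χ_{Uᵢ})^p` are finite sums with at most `N` nonzero terms,
and these agree up to the factors `N` and `N^p`. Integrating against `ν^p` and exchanging the sum
with the integral (the index set is countable, as a locally finite family of nonempty sets in a
σ-compact space) turns the first into `Σᵢ |λᵢ|^p ∫_{Uᵢ} ν^p`.
-/

open MeasureTheory Filter Topology
open scoped ENNReal NNReal

noncomputable section

open Finset

namespace ENNReal

variable {ι : Type*}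

theorem sum_rpow_le_card_mul_rpow_sum (s : Finset ι) (a : ι → ℝ≥0∞) {p : ℝ} (hp : 0 ≤ p) :
    ∑ i ∈ s, a i ^ p ≤ #s * (∑ i ∈ s, a i) ^ p :=
  calc ∑ i ∈ s, a i ^ p ≤ #s • (∑ i ∈ s, a i) ^ p :=
        s.sum_le_card_nsmul _ _ fun _ hi =>
          rpow_le_rpow (single_le_sum (fun _ _ => zero_le) hi) hp
    _ = #s * (∑ i ∈ s, a i) ^ p := nsmul_eq_mul _ _

theorem rpow_sum_le_card_rpow_mul_sum_rpow (s : Finset ι) (a : ι → ℝ≥0∞) {p : ℝ}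
    (hp : 0 < p) :
    (∑ i ∈ s, a i) ^ p ≤ (#s : ℝ≥0∞) ^ p * ∑ i ∈ s, a i ^ p := by
  rcases s.eq_empty_or_nonempty with rfl | hs
  · simp [zero_rpow_of_pos hp]
  obtain ⟨j, hj, hmax⟩ := s.exists_max_image a hs
  calc (∑ i ∈ s, a i) ^ p ≤ (#s * a j) ^ p := by
        gcongr
        rw [← nsmul_eq_mul]
        exact s.sum_le_card_nsmul _ _ hmax
    _ = (#s : ℝ≥0∞) ^ p * a j ^ p := mul_rpow_of_nonneg _ _ hp.le
    _ ≤ (#s : ℝ≥0∞) ^ p * ∑ i ∈ s, a i ^ p := by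
        gcongr
        exact single_le_sum (f := fun i => a i ^ p) (fun _ _ => zero_le) hj

end ENNReal

section PointFinite

variable {X I : Type*} {U : I → Set X}

theorem tsum_indicator_const_eq_sum {M : Type*} [AddCommMonoid M] [TopologicalSpace M]
    {y : X} (hfin : {i | y ∈ U i}.Finite) (g : I → M) :
    ∑' i, (U i).indicator (fun _ => g i) y = ∑ i ∈ hfin.toFinset, g i := by
  rw [tsum_eq_sum (s := hfin.toFinset) fun i hi => Set.indicator_of_notMem (by simpa using hi) _]
  exact sum_congr rfl fun i hi => by simp_all

variable {y : X} (hfin : {i | y ∈ U i}.Finite) {N : ℕ} (hN : {i | y ∈ U i}.ncard ≤ N)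
  (a : I → ℝ≥0∞) {p : ℝ}
include hfin hN

theorem tsum_indicator_rpow_le_mul_rpow_tsum_indicator (hp : 0 ≤ p) :
    ∑' i, (U i).indicator (fun _ => a i ^ p) y ≤
      N * (∑' i, (U i).indicator (fun _ => a i) y) ^ p := by
  rw [tsum_indicator_const_eq_sum hfin, tsum_indicator_const_eq_sum hfin]
  rw [Set.ncard_eq_toFinset_card _ hfin] at hN
  calc _ ≤ #hfin.toFinset * (∑ i ∈ hfin.toFinset, a i) ^ p :=
        ENNReal.sum_rpow_le_card_mul_rpow_sum _ _ hp
    _ ≤ N * (∑ i ∈ hfin.toFinset, a i) ^ p := by gcongr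

theorem rpow_tsum_indicator_le_rpow_mul_tsum_indicator_rpow (hp : 0 < p) :
    (∑' i, (U i).indicator (fun _ => a i) y) ^ p ≤
      (N : ℝ≥0∞) ^ p * ∑' i, (U i).indicator (fun _ => a i ^ p) y := by
  rw [tsum_indicator_const_eq_sum hfin, tsum_indicator_const_eq_sum hfin]
  rw [Set.ncard_eq_toFinset_card _ hfin] at hN
  calc _ ≤ (#hfin.toFinset : ℝ≥0∞) ^ p * ∑ i ∈ hfin.toFinset, a i ^ p :=
        ENNReal.rpow_sum_le_card_rpow_mul_sum_rpow _ _ hp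
    _ ≤ (N : ℝ≥0∞) ^ p * ∑ i ∈ hfin.toFinset, a i ^ p := by gcongr

end PointFinite

theorem lintegral_tsum_indicator_const_mul {X I : Type*} [MeasurableSpace X] [Countable I]
    {μ : Measure X} {U : I → Set X} (hU : ∀ i, MeasurableSet (U i)) (b : I → ℝ≥0∞)
    {w : X → ℝ≥0∞} (hw : Measurable w) :
    ∫⁻ y, (∑' i, (U i).indicator (fun _ => b i) y) * w y ∂μ =
      ∑' i, b i * ∫⁻ y in U i, w y ∂μ := by
  simp_rw [← ENNReal.tsum_mul_right, ← Set.indicator_mul_left]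
  rw [lintegral_tsum fun i => ((hw.const_mul (b i)).indicator (hU i)).aemeasurable]
  simp_rw [lintegral_indicator (hU _), lintegral_const_mul _ hw]

namespace AdmissibleCovering

variable {X I : Type*} [TopologicalSpace X] [MeasurableSpace X] {U : I → Set X} {σ : ℕ}

theorem countable [SigmaCompactSpace X] (hU : AdmissibleCovering U σ) : Countable I :=
  Set.countable_univ_iff.1 <|
    hU.locFin.countable_univ fun i => (hU.interior_nonempty i).mono interior_subset

theorem ncard_setOf_mem_le (hU : AdmissibleCovering U σ) (y : X) :
    {i | y ∈ U i}.ncard ≤ σ := by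
  rcases Set.eq_empty_or_nonempty {i | y ∈ U i} with h | ⟨i₀, hi₀⟩
  · simp [h]
  calc {i | y ∈ U i}.ncard ≤ {j | (U i₀ ∩ U j).Nonempty}.ncard :=
        Set.ncard_le_ncard (fun _ hj => ⟨y, hi₀, hj⟩) (hU.inter_finite i₀)
    _ ≤ σ := hU.inter_card_le i₀

end AdmissibleCovering

theorem weighted_Lp_sequence_space_equiv_general
    {X : Type*} [TopologicalSpace X] [MeasurableSpace X]
    [SigmaCompactSpace X]
    (μ : Measure X)
    {I : Type*} (U : I → Set X) (σ : ℕ) (hU : AdmissibleCovering U σ)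
    (ν : X → ℝ≥0∞) (hνmeas : Measurable ν)
    (p : ℝ) (hp : 0 < p) :
    ∃ c C : ℝ≥0∞, 0 < c ∧ C ≠ ⊤ ∧ ∀ lam : I → ℂ,
      c * ∑' i, (‖lam i‖₊ : ℝ≥0∞) ^ p * ∫⁻ y in U i, ν y ^ p ∂μ ≤
        (∫⁻ y, (∑' i, (U i).indicator (fun _ => (‖lam i‖₊ : ℝ≥0∞)) y) ^ p * ν y ^ p ∂μ) ∧
      (∫⁻ y, (∑' i, (U i).indicator (fun _ => (‖lam i‖₊ : ℝ≥0∞)) y) ^ p * ν y ^ p ∂μ) ≤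
        C * ∑' i, (‖lam i‖₊ : ℝ≥0∞) ^ p * ∫⁻ y in U i, ν y ^ p ∂μ := by
  have := hU.countable
  set N : ℕ := max σ 1
  have hN : ∀ y, {i | y ∈ U i}.ncard ≤ N := fun y =>
    (hU.ncard_setOf_mem_le y).trans (le_max_left _ _)
  have hN0 : (N : ℝ≥0∞) ≠ 0 := by simp [N]
  have hNtop : (N : ℝ≥0∞) ≠ ⊤ := ENNReal.natCast_ne_top N
  refine ⟨(N : ℝ≥0∞)⁻¹, (N : ℝ≥0∞) ^ p, ENNReal.inv_pos.2 hNtop,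
    ENNReal.rpow_ne_top_of_nonneg hp.le hNtop, fun lam => ?_⟩
  set a : I → ℝ≥0∞ := fun i => ‖lam i‖₊
  have hfin y := hU.locFin.point_finite y
  rw [← lintegral_tsum_indicator_const_mul hU.meas (fun i => a i ^ p) (hνmeas.pow_const p)]
  constructor
  · rw [ENNReal.inv_mul_le_iff hN0 hNtop, ← lintegral_const_mul' _ _ hNtop]
    refine lintegral_mono fun y => ?_
    rw [← mul_assoc]
    gcongr
    exact tsum_indicator_rpow_le_mul_rpow_tsum_indicator (hfin y) (hN y) a hp.le
  · rw [← lintegral_const_mul' _ _ (ENNReal.rpow_ne_top_of_nonneg hp.le hNtop)]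
    refine lintegral_mono fun y => ?_
    rw [← mul_assoc]
    gcongr
    exact rpow_tsum_indicator_le_rpow_mul_tsum_indicator_rpow (hfin y) (hN y) a hp

/-- For `Y = L_p^ν(X)` and an admissible covering `U` of `X`, the sequence
space norm of `Y♭(U)` is equivalent to a weighted `ℓ_p` norm: there are constants
`0 < c ≤ C < ∞` (depending only on `p` and `σ(U)`) with
`c Σᵢ |λᵢ|^p ∫_{Uᵢ} ν^p ≤ ∫_X (Σᵢ |λᵢ| χ_{Uᵢ} ν)^p ≤ C Σᵢ |λᵢ|^p ∫_{Uᵢ} ν^p`. -/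
theorem weighted_Lp_sequence_space_equiv
    {X : Type*} [TopologicalSpace X] [MeasurableSpace X] [BorelSpace X]
    [T2Space X] [LocallyCompactSpace X] [SigmaCompactSpace X]
    (μ : Measure X) [IsFiniteMeasureOnCompacts μ]
    (hsupp : ∀ V : Set X, IsOpen V → V.Nonempty → 0 < μ V)
    {I : Type*} (U : I → Set X) (σ : ℕ) (hU : AdmissibleCovering U σ)
    (ν : X → ℝ≥0∞) (hνmeas : Measurable ν) (hνpos : ∀ x, 0 < ν x) (hνfin : ∀ x, ν x < ⊤)
    (p : ℝ) (hp : 0 < p) :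
    ∃ c C : ℝ≥0∞, 0 < c ∧ C ≠ ⊤ ∧ ∀ lam : I → ℂ,
      c * ∑' i, (‖lam i‖₊ : ℝ≥0∞) ^ p * ∫⁻ y in U i, ν y ^ p ∂μ ≤
        (∫⁻ y, (∑' i, (U i).indicator (fun _ => (‖lam i‖₊ : ℝ≥0∞)) y) ^ p * ν y ^ p ∂μ) ∧
      (∫⁻ y, (∑' i, (U i).indicator (fun _ => (‖lam i‖₊ : ℝ≥0∞)) y) ^ p * ν y ^ p ∂μ) ≤
        C * ∑' i, (‖lam i‖₊ : ℝ≥0∞) ^ p * ∫⁻ y in U i, ν y ^ p ∂μ :=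
  weighted_Lp_sequence_space_equiv_general μ U σ hU ν hνmeas p hp
end
end
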